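/- Let k ≥ 4 and let σ = ((m₁,n₁),…,(m_k,n_k)) be a k-tuple of pairs of nonzero integers with |m_i| < |n_i| for every i. For every i ∈ ℤ/kℤ, the group homomorphism from BS(m_i, n_i) to Hig_σ determined by sending t to a_{i−1} and a to a_i is injective. -/

import Mathlib

/-- The `i`-th defining relator `a_i a_{i+1}^{m_i} a_i⁻¹ (a_{i+1}^{n_i})⁻¹` of the generalized
Higman group, as an element of the free group on `ZMod k`. -/
def higRel (k : ℕ) (m n : ZMod k → ℤ) (i : ZMod k) : FreeGroup (ZMod k) :=
  FreeGroup.of i * FreeGroup.of (i + 1) ^ m i * (FreeGroup.of i)⁻¹ *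
    (FreeGroup.of (i + 1) ^ n i)⁻¹

/-- The generalized Higman group
`Hig_σ = ⟨a₁, …, a_k ∣ a_i a_{i+1}^{m_i} a_i⁻¹ = a_{i+1}^{n_i} (i ∈ ℤ/kℤ)⟩`. -/
abbrev Hig (k : ℕ) (m n : ZMod k → ℤ) : Type := PresentedGroup (Set.range (higRel k m n))

/-- The generator `a_i` of the generalized Higman group. -/
def Hig.gen (k : ℕ) (m n : ZMod k → ℤ) (i : ZMod k) : Hig k m n := PresentedGroup.of i
/-- The single defining relator `t a^m t⁻¹ (a^n)⁻¹` of the Baumslag–Solitar group `BS(m,n)`,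
as an element of the free group on `Bool`, where `false` stands for the generator `a` and
`true` for the generator `t`. -/
def bsRel (m n : ℤ) : FreeGroup Bool :=
  FreeGroup.of true * FreeGroup.of false ^ m * (FreeGroup.of true)⁻¹ *
    (FreeGroup.of false ^ n)⁻¹

/-- The Baumslag–Solitar group `BS(m,n) = ⟨a, t ∣ t a^m t⁻¹ = a^n⟩`. -/
abbrev BS (m n : ℤ) : Type := PresentedGroup ({bsRel m n} : Set (FreeGroup Bool))

/-- The generator `a` of `BS(m,n)`. -/
def BS.a (m n : ℤ) : BS m n := PresentedGroup.of false

/-- The generator `t` (stable letter) of `BS(m,n)`. -/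
def BS.t (m n : ℤ) : BS m n := PresentedGroup.of true


/-!
Following Higman, realise the cycle of Baumslag–Solitar groups as an amalgam of two paths.
Amalgamating `BS(M 0, N 0), …, BS(M s, N s)` along a path, identifying `a` of each factor with
`t` of the next, gives a group into which the first factor embeds; by the normal form for
amalgams, its two end vertices generate a free group of rank two as soon as the path has at
least two edges. This uses that `⟨t⟩ ∩ ⟨a⟩ = 1` in `BS(m,n)` (look at the exponent sum of `t`)
and that `a` has infinite order when `m, n ≠ 0` (`BS(m,n)` acts on `ℚ` by `x ↦ x + 1` and
`x ↦ (n / m) x`). As `k ≥ 4`, the cycle `a_i, …, a_{i+k} = a_i` splits into paths of length `2`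
and `k - 2` with common ends `a_i` and `a_{i+2}`; their amalgam over the free group on these
ends satisfies the relations of `Hig_σ` and contains `BS(m_i, n_i)`.
-/

open Function Subgroup

universe u

lemma PresentedGroup.lift_of_eq_one_of_mem {α : Type*} {rels : Set (FreeGroup α)}
    {r : FreeGroup α} (h : r ∈ rels) : FreeGroup.lift (PresentedGroup.of (rels := rels)) r = 1 := by
  rw [show FreeGroup.lift _ = PresentedGroup.mk rels from FreeGroup.ext_hom _ _ fun _ => rfl]
  exact PresentedGroup.one_of_mem h

lemma injective_zpowersHom {G : Type*} [Group G] {g : G} (hg : ¬IsOfFinOrder g) :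
    Injective (zpowersHom G g) :=
  (injective_zpow_iff_not_isOfFinOrder.2 hg).comp Multiplicative.toAdd.injective

namespace BS

variable {m n : ℤ} {G H : Type*} [Group G] [Group H]

lemma lift_bsRel_eq_one_iff (f : Bool → G) :
    FreeGroup.lift f (bsRel m n) = 1 ↔ f true * f false ^ m * (f true)⁻¹ = f false ^ n := by
  simp [bsRel, mul_inv_eq_one]

variable (m n) in
lemma t_mul_a_zpow_mul_t_inv : t m n * a m n ^ m * (t m n)⁻¹ = a m n ^ n :=
  (lift_bsRel_eq_one_iff _).1 (PresentedGroup.lift_of_eq_one_of_mem rfl)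

lemma relation_map (f : G →* H) {x y : G} (h : x * y ^ m * x⁻¹ = y ^ n) :
    f x * f y ^ m * (f x)⁻¹ = f y ^ n := by
  simp only [← map_zpow, ← map_inv, ← map_mul, h]

def lift {x y : G} (h : x * y ^ m * x⁻¹ = y ^ n) : BS m n →* G :=
  PresentedGroup.toGroup (f := fun b => cond b x y) fun r hr => by
    rw [Set.mem_singleton_iff.1 hr, lift_bsRel_eq_one_iff]
    exact h

@[simp] lemma lift_t {x y : G} (h : x * y ^ m * x⁻¹ = y ^ n) : lift h (t m n) = x :=
  PresentedGroup.toGroup.of _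

@[simp] lemma lift_a {x y : G} (h : x * y ^ m * x⁻¹ = y ^ n) : lift h (a m n) = y :=
  PresentedGroup.toGroup.of _

lemma hom_ext {f g : BS m n →* G} (ht : f (t m n) = g (t m n)) (ha : f (a m n) = g (a m n)) :
    f = g :=
  PresentedGroup.ext fun b => by cases b <;> assumption

variable (m n) in
def degree : BS m n →* Multiplicative ℤ :=
  lift (x := Multiplicative.ofAdd 1) (y := 1) (by simp)

lemma not_isOfFinOrder_t : ¬IsOfFinOrder (t m n) := by
  rw [← injective_zpow_iff_not_isOfFinOrder]
  intro p q h
  simpa [degree, ← ofAdd_zsmul] using congrArg (degree m n) h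

lemma disjoint_zpowers_t_a : Disjoint (zpowers (t m n)) (zpowers (a m n)) := by
  rw [Subgroup.disjoint_def]
  rintro _ ⟨p, rfl⟩ ⟨q, hq⟩
  have hp : Multiplicative.ofAdd p = 1 := by
    simpa [degree, ← ofAdd_zsmul] using (congrArg (degree m n) hq).symm
  simp [ofAdd_eq_one.1 hp]

def toPerm (hm : m ≠ 0) (hn : n ≠ 0) : BS m n →* Equiv.Perm ℚ :=
  lift (x := Equiv.mulLeft₀ ((n : ℚ) / m) (by simp [hm, hn])) (y := Equiv.addRight 1) <| by
    ext x
    simp only [Equiv.zsmul_addRight, zsmul_eq_mul, mul_one, Equiv.Perm.coe_mul,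
      Equiv.mulLeft₀_apply, Equiv.coe_addRight, Equiv.Perm.coe_inv, Equiv.mulLeft₀_symm_apply,
      inv_div, comp_apply]
    field_simp

lemma not_isOfFinOrder_a (hm : m ≠ 0) (hn : n ≠ 0) : ¬IsOfFinOrder (a m n) := by
  rw [← injective_zpow_iff_not_isOfFinOrder]
  intro p q h
  simpa [toPerm] using congrArg (fun g => toPerm hm hn g 0) h

variable (m n) in
def Embeds (x y : G) : Prop :=
  ∃ f : BS m n →* G, f (t m n) = x ∧ f (a m n) = y ∧ Injective f

lemma embeds_t_a : Embeds m n (t m n) (a m n) :=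
  ⟨MonoidHom.id _, rfl, rfl, injective_id⟩

lemma Embeds.map {x y : G} (h : Embeds m n x y) {φ : G →* H} (hφ : Injective φ) :
    Embeds m n (φ x) (φ y) := by
  obtain ⟨f, hx, hy, hf⟩ := h
  exact ⟨φ.comp f, by simp [hx], by simp [hy], hφ.comp hf⟩

lemma Embeds.of_map {x y : G} (hxy : x * y ^ m * x⁻¹ = y ^ n) (φ : G →* H)
    (h : Embeds m n (φ x) (φ y)) : Embeds m n x y := by
  obtain ⟨f, hx, hy, hf⟩ := h
  have hcomp : φ.comp (lift hxy) = f := hom_ext (by simp [hx]) (by simp [hy])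
  refine ⟨lift hxy, lift_t hxy, lift_a hxy, Injective.of_comp (f := φ) ?_⟩
  rwa [← MonoidHom.coe_comp, hcomp]

end BS

lemma ZMod.apply_val_natCast_of_le {k : ℕ} [NeZero k] {α : Type*} {g : ℕ → α} (hg : g k = g 0)
    {r : ℕ} (hr : r ≤ k) : g (r : ZMod k).val = g r := by
  rcases hr.lt_or_eq with hr | rfl
  · rw [ZMod.val_natCast_of_lt hr]
  · rw [ZMod.natCast_self, ZMod.val_zero, hg]

namespace Hig

variable {k : ℕ} {m n : ZMod k → ℤ} {G : Type*} [Group G]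

lemma lift_higRel_eq_one_iff (f : ZMod k → G) (j : ZMod k) :
    FreeGroup.lift f (higRel k m n j) = 1 ↔
      f j * f (j + 1) ^ m j * (f j)⁻¹ = f (j + 1) ^ n j := by
  simp [higRel, mul_inv_eq_one]

lemma gen_mul_gen_zpow_mul_gen_inv (j : ZMod k) :
    gen k m n j * gen k m n (j + 1) ^ m j * (gen k m n j)⁻¹ = gen k m n (j + 1) ^ n j :=
  (lift_higRel_eq_one_iff _ j).1 (PresentedGroup.lift_of_eq_one_of_mem ⟨j, rfl⟩)

def lift (x : ZMod k → G) (h : ∀ j, x j * x (j + 1) ^ m j * (x j)⁻¹ = x (j + 1) ^ n j) :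
    Hig k m n →* G :=
  PresentedGroup.toGroup (f := x) <| by
    rintro _ ⟨j, rfl⟩
    exact (lift_higRel_eq_one_iff x j).2 (h j)

@[simp] lemma lift_gen (x : ZMod k → G)
    (h : ∀ j, x j * x (j + 1) ^ m j * (x j)⁻¹ = x (j + 1) ^ n j) (j : ZMod k) :
    lift x h (gen k m n j) = x j :=
  PresentedGroup.toGroup.of _

lemma exists_hom_of_periodic [NeZero k] (i : ZMod k) (g : ℕ → G) (hg : g k = g 0)
    (hrel : ∀ r < k, g r * g (r + 1) ^ m (i + r) * (g r)⁻¹ = g (r + 1) ^ n (i + r)) :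
    ∃ θ : Hig k m n →* G, ∀ r ≤ k, θ (gen k m n (i + r)) = g r := by
  have hx : ∀ r ≤ k, g ((i + r : ZMod k) - i).val = g r := fun r hr => by
    rw [add_sub_cancel_left, ZMod.apply_val_natCast_of_le hg hr]
  refine ⟨lift (fun v => g (v - i).val) fun j => ?_, fun r hr => by rw [lift_gen, hx r hr]⟩
  obtain ⟨r, hr, rfl⟩ : ∃ r < k, i + (r : ZMod k) = j :=
    ⟨(j - i).val, ZMod.val_lt _, by rw [ZMod.natCast_zmod_val, add_sub_cancel]⟩
  rw [show i + (r : ZMod k) + 1 = i + ((r + 1 : ℕ) : ZMod k) by push_cast; ring,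
    hx r hr.le, hx (r + 1) hr]
  exact hrel r hr

end Hig

namespace FreeGroup

variable {G : Type*} [Group G]

lemma range_lift_const (u : G) : (lift fun _ : Unit => u).range = zpowers u := by
  rw [range_lift_eq_closure, Set.range_const, zpowers_eq_closure]

lemma injective_lift_const {u : G} (hu : ¬IsOfFinOrder u) :
    Injective (lift fun _ : Unit => u) := by
  have h : lift (fun _ : Unit => u) = (zpowersHom G u).comp mulEquivIntOfUnique.toMonoidHom :=
    ext_hom _ _ fun _ => by simp [mulEquivIntOfUnique, equivIntOfUnique]
  rw [h, MonoidHom.coe_comp]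
  exact (injective_zpowersHom hu).comp mulEquivIntOfUnique.injective

lemma injective_lift_comp_equiv {α β : Type*} {f : α → G} (hf : Injective (lift f))
    (e : β ≃ α) : Injective (lift (f ∘ e)) := by
  have h : lift (f ∘ e) = (lift f).comp (freeGroupCongr e).toMonoidHom :=
    ext_hom _ _ fun _ => by simp [freeGroupCongr]
  rw [h, MonoidHom.coe_comp]
  exact hf.comp (freeGroupCongr e).injective

end FreeGroup

namespace Monoid.PushoutI

variable {ι H : Type*} {G : ι → Type*} [Group H] [∀ i, Group (G i)] {φ : ∀ i, H →* G i}

/-- A reduced word in the `K i` is mapped by the `ψ i` to a reduced word of the amalgam. -/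
theorem injective_lift_comp_of {K : ι → Type*} [∀ i, Group (K i)] (hφ : ∀ i, Injective (φ i))
    {ψ : ∀ i, K i →* G i} (hψ : ∀ i, Injective (ψ i))
    (hdisj : ∀ i, Disjoint (ψ i).range (φ i).range) :
    Injective (CoprodI.lift fun i => (of (φ := φ) i).comp (ψ i)) := by
  classical
  rw [injective_iff_map_eq_one]
  intro w hw
  obtain ⟨W, rfl⟩ := CoprodI.Word.equiv.symm.surjective w
  have hne : ∀ l ∈ W.toList, ψ l.1 l.2 ≠ 1 := fun l hl =>
    (map_ne_one_iff _ (hψ l.1)).2 (W.ne_one l hl)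
  let W' : CoprodI.Word G :=
    { toList := W.toList.map fun l => ⟨l.1, ψ l.1 l.2⟩
      ne_one := by
        simp only [List.mem_map]
        rintro _ ⟨l, hl, rfl⟩
        exact hne l hl
      chain_ne := List.isChain_map _ |>.2 W.chain_ne }
  have hred : Reduced φ W' := by
    simp only [Reduced, W', List.mem_map]
    rintro _ ⟨l, hl, rfl⟩ hφl
    exact hne l hl (Subgroup.disjoint_def.1 (hdisj l.1) ⟨l.2, rfl⟩ hφl)
  have hprod : ofCoprodI W'.prod = CoprodI.lift (fun i => (of (φ := φ) i).comp (ψ i))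
      (CoprodI.Word.equiv.symm W) := by
    simp [W', CoprodI.Word.equiv, CoprodI.Word.prod, map_list_prod, Function.comp_def]
  have hW' : W' = .empty := hred.eq_empty_of_mem_range hφ (by rw [hprod, hw]; exact one_mem _)
  have hW : W.toList = [] := by simpa [W'] using congrArg CoprodI.Word.toList hW'
  simp [CoprodI.Word.equiv, CoprodI.Word.prod, hW]

theorem injective_freeGroupLift_of (hφ : ∀ i, Injective (φ i)) {u : ∀ i, G i}
    (hu : ∀ i, ¬IsOfFinOrder (u i)) (hdisj : ∀ i, Disjoint (zpowers (u i)) (φ i).range) :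
    Injective (FreeGroup.lift fun i => of (φ := φ) i (u i)) := by
  have h : FreeGroup.lift (fun i => of (φ := φ) i (u i)) =
      (CoprodI.lift fun i => (of i).comp (FreeGroup.lift fun _ : Unit => u i)).comp
        freeGroupEquivCoprodI.toMonoidHom :=
    FreeGroup.ext_hom _ _ fun i => by simp
  rw [h, MonoidHom.coe_comp]
  refine Injective.comp ?_ freeGroupEquivCoprodI.injective
  exact injective_lift_comp_of hφ (fun i => FreeGroup.injective_lift_const (hu i))
    fun i => by rw [FreeGroup.range_lift_const]; exact hdisj i

end Monoid.PushoutI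

section Amalgam

variable {K G H : Type u} [Group K] [Group G] [Group H]

def AmalgamFactor (G H : Type u) : Bool → Type u
  | false => G
  | true => H

instance : ∀ b, Group (AmalgamFactor G H b)
  | false => ‹Group G›
  | true => ‹Group H›

def amalgamMap (φ : K →* G) (ψ : K →* H) : ∀ b, K →* AmalgamFactor G H b
  | false => φ
  | true => ψ

abbrev Amalgam (φ : K →* G) (ψ : K →* H) : Type u := Monoid.PushoutI (amalgamMap φ ψ)

namespace Amalgam

variable {φ : K →* G} {ψ : K →* H}

def inl : G →* Amalgam φ ψ := Monoid.PushoutI.of (φ := amalgamMap φ ψ) false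

def inr : H →* Amalgam φ ψ := Monoid.PushoutI.of (φ := amalgamMap φ ψ) true

lemma inl_apply_eq_inr_apply (k : K) : (inl (φ k) : Amalgam φ ψ) = inr (ψ k) :=
  (Monoid.PushoutI.of_apply_eq_base _ false k).trans
    (Monoid.PushoutI.of_apply_eq_base _ true k).symm

lemma injective_amalgamMap (hφ : Injective φ) (hψ : Injective ψ) :
    ∀ b, Injective (amalgamMap φ ψ b)
  | false => hφ
  | true => hψ

lemma inl_injective (hφ : Injective φ) (hψ : Injective ψ) :
    Injective (inl : G →* Amalgam φ ψ) :=
  Monoid.PushoutI.of_injective (injective_amalgamMap hφ hψ) false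

lemma inr_injective (hφ : Injective φ) (hψ : Injective ψ) :
    Injective (inr : H →* Amalgam φ ψ) :=
  Monoid.PushoutI.of_injective (injective_amalgamMap hφ hψ) true

lemma disjoint_map_inl_map_inr (hφ : Injective φ) (hψ : Injective ψ) {U : Subgroup G}
    (hU : Disjoint U φ.range) (V : Subgroup H) :
    Disjoint (U.map (inl : G →* Amalgam φ ψ)) (V.map inr) := by
  rw [Subgroup.disjoint_def]
  rintro _ ⟨u, hu, rfl⟩ hv
  have hbase : inl u ∈ (Monoid.PushoutI.base (amalgamMap φ ψ)).range := by
    rw [← Monoid.PushoutI.inf_of_range_eq_base_range (injective_amalgamMap hφ hψ)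
      Bool.false_ne_true]
    exact ⟨⟨u, rfl⟩, V.map_le_range inr hv⟩
  obtain ⟨k, hk⟩ := hbase
  rw [← Monoid.PushoutI.of_apply_eq_base _ false] at hk
  rw [Subgroup.disjoint_def.1 hU hu ⟨k, inl_injective hφ hψ hk⟩, map_one]

lemma injective_freeGroupLift (hφ : Injective φ) (hψ : Injective ψ) {u : G} {v : H}
    (hu : ¬IsOfFinOrder u) (hv : ¬IsOfFinOrder v) (hU : Disjoint (zpowers u) φ.range)
    (hV : Disjoint (zpowers v) ψ.range) :
    Injective (FreeGroup.lift fun b => cond b (inr v) (inl u : Amalgam φ ψ)) := by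
  let w : ∀ b, AmalgamFactor G H b
    | false => u
    | true => v
  convert Monoid.PushoutI.injective_freeGroupLift_of (injective_amalgamMap hφ hψ) (u := w)
    (Bool.forall_bool.2 ⟨hu, hv⟩) (Bool.forall_bool.2 ⟨hU, hV⟩) using 3
  funext b
  cases b <;> rfl

end Amalgam

end Amalgam

/-- The invariants of the iterated amalgam `BS(M 0, N 0) *_ℤ ⋯ *_ℤ BS(M s, N s)`, in which the
generator `a` of each factor is identified with the stable letter `t` of the next; `x j` is the
image of the `j`-th vertex. -/
structure BSChain (M N : ℕ → ℤ) (s : ℕ) where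
  G : Type
  [group : Group G]
  x : ℕ → G
  rel : ∀ j ≤ s, x j * x (j + 1) ^ M j * (x j)⁻¹ = x (j + 1) ^ N j
  embeds : BS.Embeds (M 0) (N 0) (x 0) (x 1)
  not_isOfFinOrder_head : ¬IsOfFinOrder (x 0)
  not_isOfFinOrder_last : ¬IsOfFinOrder (x (s + 1))
  disjoint_zpowers : Disjoint (zpowers (x 0)) (zpowers (x (s + 1)))

attribute [instance] BSChain.group

namespace BSChain

variable {M N : ℕ → ℤ} {s : ℕ}

def ends (P : BSChain M N s) (b : Bool) : P.G := cond b (P.x (s + 1)) (P.x 0)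

def base (hM : M 0 ≠ 0) (hN : N 0 ≠ 0) : BSChain M N 0 where
  G := BS (M 0) (N 0)
  x j := if j = 0 then BS.t _ _ else BS.a _ _
  rel j hj := by
    obtain rfl := Nat.le_zero.1 hj
    exact BS.t_mul_a_zpow_mul_t_inv _ _
  embeds := BS.embeds_t_a
  not_isOfFinOrder_head := BS.not_isOfFinOrder_t
  not_isOfFinOrder_last := BS.not_isOfFinOrder_a hM hN
  disjoint_zpowers := BS.disjoint_zpowers_t_a

section Step

variable (P : BSChain M N s) (hM : M (s + 1) ≠ 0) (hN : N (s + 1) ≠ 0)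

abbrev StepGroup : Type :=
  Amalgam (zpowersHom P.G (P.x (s + 1))) (zpowersHom _ (BS.t (M (s + 1)) (N (s + 1))))

lemma injective_inl_step : Injective (Amalgam.inl : P.G →* P.StepGroup) :=
  Amalgam.inl_injective (injective_zpowersHom P.not_isOfFinOrder_last)
    (injective_zpowersHom BS.not_isOfFinOrder_t)

lemma injective_inr_step : Injective (Amalgam.inr : BS _ _ →* P.StepGroup) :=
  Amalgam.inr_injective (injective_zpowersHom P.not_isOfFinOrder_last)
    (injective_zpowersHom BS.not_isOfFinOrder_t)

def stepX (j : ℕ) : P.StepGroup :=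
  if j ≤ s + 1 then Amalgam.inl (P.x j) else Amalgam.inr (BS.a _ _)

lemma stepX_of_le {j : ℕ} (hj : j ≤ s + 1) : P.stepX j = Amalgam.inl (P.x j) := if_pos hj

lemma stepX_succ : P.stepX (s + 1) = Amalgam.inr (BS.t _ _) := by
  simpa [stepX_of_le] using
    Amalgam.inl_apply_eq_inr_apply (φ := zpowersHom P.G (P.x (s + 1)))
      (ψ := zpowersHom _ (BS.t (M (s + 1)) (N (s + 1)))) (Multiplicative.ofAdd 1)

lemma stepX_succ_succ : P.stepX (s + 2) = Amalgam.inr (BS.a _ _) := if_neg (by omega)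

def step : BSChain M N (s + 1) where
  G := P.StepGroup
  x := P.stepX
  rel j hj := by
    rcases hj.lt_or_eq with hj | rfl
    · rw [P.stepX_of_le hj.le, P.stepX_of_le hj]
      exact BS.relation_map _ (P.rel j (by omega))
    · rw [P.stepX_succ, P.stepX_succ_succ]
      exact BS.relation_map _ (BS.t_mul_a_zpow_mul_t_inv _ _)
  embeds := by
    rw [P.stepX_of_le (by omega), P.stepX_of_le (by omega)]
    exact P.embeds.map P.injective_inl_step
  not_isOfFinOrder_head := by
    rw [P.stepX_of_le (by omega), P.injective_inl_step.isOfFinOrder_iff]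
    exact P.not_isOfFinOrder_head
  not_isOfFinOrder_last := by
    rw [P.stepX_succ_succ, P.injective_inr_step.isOfFinOrder_iff]
    exact BS.not_isOfFinOrder_a hM hN
  disjoint_zpowers := by
    rw [P.stepX_of_le (by omega), P.stepX_succ_succ, ← MonoidHom.map_zpowers,
      ← MonoidHom.map_zpowers]
    exact Amalgam.disjoint_map_inl_map_inr (injective_zpowersHom P.not_isOfFinOrder_last)
      (injective_zpowersHom BS.not_isOfFinOrder_t) P.disjoint_zpowers _

lemma injective_lift_step_ends : Injective (FreeGroup.lift (P.step hM hN).ends) := by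
  have hends : (P.step hM hN).ends =
      fun b => cond b (Amalgam.inr (BS.a _ _)) (Amalgam.inl (P.x 0)) := by
    funext b
    cases b
    · exact P.stepX_of_le (Nat.zero_le _)
    · exact P.stepX_succ_succ
  rw [hends]
  exact Amalgam.injective_freeGroupLift (injective_zpowersHom P.not_isOfFinOrder_last)
    (injective_zpowersHom BS.not_isOfFinOrder_t) P.not_isOfFinOrder_head
    (BS.not_isOfFinOrder_a hM hN) P.disjoint_zpowers BS.disjoint_zpowers_t_a.symm

end Step

def build (M N : ℕ → ℤ) (hM : ∀ j, M j ≠ 0) (hN : ∀ j, N j ≠ 0) : ∀ s, BSChain M N s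
  | 0 => base (hM 0) (hN 0)
  | s + 1 => (build M N hM hN s).step (hM _) (hN _)

/-- Higman's construction: a chain through the vertices `0, 1, 2` and a chain through
`2, 3, …, s + 4` are amalgamated along the free group generated by their ends, which closes
the path up into a cycle of length `s + 4`. -/
theorem exists_cycle (hM : ∀ j, M j ≠ 0) (hN : ∀ j, N j ≠ 0) (s : ℕ) :
    ∃ (X : Type) (_ : Group X) (g : ℕ → X), g (s + 4) = g 0 ∧
      (∀ r < s + 4, g r * g (r + 1) ^ M r * (g r)⁻¹ = g (r + 1) ^ N r) ∧
      BS.Embeds (M 0) (N 0) (g 0) (g 1) := by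
  let A := build M N hM hN 1
  let B := build (fun j => M (j + 2)) (fun j => N (j + 2)) (fun _ => hM _) (fun _ => hN _) (s + 1)
  have hA : Injective (FreeGroup.lift A.ends) := (build M N hM hN 0).injective_lift_step_ends _ _
  have hB : Injective (FreeGroup.lift (B.ends ∘ Equiv.boolNot)) :=
    FreeGroup.injective_lift_comp_equiv ((build _ _ _ _ s).injective_lift_step_ends _ _) _
  let X := Amalgam (FreeGroup.lift A.ends) (FreeGroup.lift (B.ends ∘ Equiv.boolNot))
  let g (r : ℕ) : X := if r ≤ 2 then Amalgam.inl (A.x r) else Amalgam.inr (B.x (r - 2))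
  have hgA {r : ℕ} (hr : r ≤ 2) : g r = Amalgam.inl (A.x r) := if_pos hr
  have hglue (b : Bool) : g (cond b 2 0) = Amalgam.inr (B.ends (!b)) := by
    have := Amalgam.inl_apply_eq_inr_apply (φ := FreeGroup.lift A.ends)
      (ψ := FreeGroup.lift (B.ends ∘ Equiv.boolNot)) (FreeGroup.of b)
    cases b <;> simpa [hgA, ends] using this
  have hgB {r : ℕ} (hr : 2 ≤ r) : g r = Amalgam.inr (B.x (r - 2)) := by
    rcases hr.lt_or_eq with hr | rfl
    · exact if_neg (by omega)
    · exact hglue true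
  refine ⟨X, inferInstance, g, ?_, fun r hr => ?_, ?_⟩
  · rw [hgB (by omega)]
    exact (hglue false).symm
  · rcases lt_or_ge r 2 with h | h
    · rw [hgA h.le, hgA h]
      exact BS.relation_map _ (A.rel r (by omega))
    · have := BS.relation_map (Amalgam.inr : _ →* X) (B.rel (r - 2) (by omega))
      rwa [Nat.sub_add_cancel h, show r - 2 + 1 = r + 1 - 2 by omega, ← hgB h,
        ← hgB (by omega)] at this
  · rw [hgA (by omega), hgA (by omega)]
    exact A.embeds.map (Amalgam.inl_injective hA hB)

end BSChain

theorem bs_to_hig_injective_general (k : ℕ) (hk : 4 ≤ k) (m n : ZMod k → ℤ)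
    (hm : ∀ i, m i ≠ 0) (hn : ∀ i, n i ≠ 0) (i : ZMod k) :
    ∃ f : BS (m i) (n i) →* Hig k m n,
      f (BS.t (m i) (n i)) = Hig.gen k m n i ∧
      f (BS.a (m i) (n i)) = Hig.gen k m n (i + 1) ∧
      Function.Injective f := by
  obtain ⟨s, rfl⟩ : ∃ s, k = s + 4 := ⟨k - 4, by omega⟩
  obtain ⟨X, _, g, hper, hrel, hemb⟩ := BSChain.exists_cycle (M := fun r => m (i + r))
    (N := fun r => n (i + r)) (fun _ => hm _) (fun _ => hn _) s
  obtain ⟨θ, hθ⟩ := Hig.exists_hom_of_periodic i g hper hrel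
  refine BS.Embeds.of_map (Hig.gen_mul_gen_zpow_mul_gen_inv i) θ ?_
  have h0 := hθ 0 (by omega)
  have h1 := hθ 1 (by omega)
  simp only [Nat.cast_zero, Nat.cast_one, add_zero] at h0 h1 hemb
  rwa [h0, h1]

/-- For `k ≥ 4` and `σ` a `k`-tuple of pairs of nonzero integers with
`|m_i| < |n_i|`, for every `i ∈ ℤ/kℤ` the homomorphism from the Baumslag–Solitar group on the
pair of parameters attached to the edge `{a_i, a_{i+1}}`, determined by sending the stable
letter `t` to `a_i` and `a` to `a_{i+1}`, is injective. (With the indexing convention used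
here for the relators of `Hig_σ`, the vertex group generated by `a_{i-1}` and `a_i` in the
paper corresponds, after the translation `i ↦ i+1` of the index, to the subgroup generated
by `a_i` and `a_{i+1}`, with `t ↦ a_i` and `a ↦ a_{i+1}`.) -/
theorem bs_to_hig_injective (k : ℕ) (hk : 4 ≤ k) (m n : ZMod k → ℤ)
    (hm : ∀ i, m i ≠ 0) (hn : ∀ i, n i ≠ 0) (hmn : ∀ i, |m i| < |n i|) (i : ZMod k) :
    ∃ f : BS (m i) (n i) →* Hig k m n,
      f (BS.t (m i) (n i)) = Hig.gen k m n i ∧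
      f (BS.a (m i) (n i)) = Hig.gen k m n (i + 1) ∧
      Function.Injective f :=
  bs_to_hig_injective_general k hk m n hm hn i
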